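/- Unactuability characterization (Theorem 4.7): a pair (a_u, −a_y) satisfies X a_u + Y(−a_y) = 0 if and only if there exists r with a_u = −Ŷ r and −a_y = X̂ r; i.e., attacks have no effect on the closed-loop image dynamics exactly when the attack pair lies in the controller image subspace I_K = {(−Ŷr, X̂r)}. -/

import Mathlib

/-!
The identities `g11`–`g22` say that `[M, -Ŷ; N, X̂]` is a left inverse of `[X, Y; -N̂, M̂]`, so a pair
`(u, y)` is recovered from `v = X u + Y y` and `r = M̂ y - N̂ u` as `u = M v - Ŷ r`, `y = N v + X̂ r`.
When `v = 0` this exhibits `(u, y)` in the controller image; conversely `X Ŷ = Y X̂` (`h12`) says that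
`X` and `Y` annihilate every pair `(-Ŷ r, X̂ r)`.
-/

section DoubleBezout

variable {R U Ys V W : Type*} [Semiring R] [AddCommGroup U] [AddCommGroup Ys] [AddCommGroup V]
  [AddCommGroup W] [Module R U] [Module R Ys] [Module R V] [Module R W]
  {M : V →ₗ[R] U} {N : V →ₗ[R] Ys} {X : U →ₗ[R] V} {Yc : Ys →ₗ[R] V}
  {Mh : Ys →ₗ[R] W} {Nh : U →ₗ[R] W} {Xh : W →ₗ[R] Ys} {Yh : W →ₗ[R] U}

theorem bezout_reconstruct_fst (g11 : M ∘ₗ X + Yh ∘ₗ Nh = LinearMap.id)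
    (g12 : M ∘ₗ Yc - Yh ∘ₗ Mh = 0) (u : U) (y : Ys) :
    u = M (X u + Yc y) - Yh (Mh y - Nh u) :=
  calc u = (M ∘ₗ X + Yh ∘ₗ Nh) u + (M ∘ₗ Yc - Yh ∘ₗ Mh) y := by simp [g11, g12]
    _ = M (X u + Yc y) - Yh (Mh y - Nh u) := by simp only [LinearMap.add_apply,
        LinearMap.sub_apply, LinearMap.comp_apply, map_add, map_sub]; abel

theorem bezout_reconstruct_snd (g21 : N ∘ₗ X - Xh ∘ₗ Nh = 0)
    (g22 : N ∘ₗ Yc + Xh ∘ₗ Mh = LinearMap.id) (u : U) (y : Ys) :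
    y = N (X u + Yc y) + Xh (Mh y - Nh u) :=
  calc y = (N ∘ₗ X - Xh ∘ₗ Nh) u + (N ∘ₗ Yc + Xh ∘ₗ Mh) y := by simp [g21, g22]
    _ = N (X u + Yc y) + Xh (Mh y - Nh u) := by simp only [LinearMap.add_apply,
        LinearMap.sub_apply, LinearMap.comp_apply, map_add, map_sub]; abel

theorem map_neg_Yh_add_map_Xh_eq_zero (h12 : -(X ∘ₗ Yh) + Yc ∘ₗ Xh = 0) (r : W) :
    X (-Yh r) + Yc (Xh r) = 0 := by
  simpa [neg_add_eq_sub] using LinearMap.congr_fun h12 r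

end DoubleBezout

theorem stmt10_general {R : Type*} [CommRing R]
    {U Ys V W : Type*} [AddCommGroup U] [AddCommGroup Ys] [AddCommGroup V] [AddCommGroup W]
    [Module R U] [Module R Ys] [Module R V] [Module R W]
    (M : V →ₗ[R] U) (N : V →ₗ[R] Ys) (X : U →ₗ[R] V) (Yc : Ys →ₗ[R] V)
    (Mh : Ys →ₗ[R] W) (Nh : U →ₗ[R] W) (Xh : W →ₗ[R] Ys) (Yh : W →ₗ[R] U)
    (h12 : -(X ∘ₗ Yh) + Yc ∘ₗ Xh = 0)
    (g11 : M ∘ₗ X + Yh ∘ₗ Nh = LinearMap.id)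
    (g12 : M ∘ₗ Yc - Yh ∘ₗ Mh = 0)
    (g21 : N ∘ₗ X - Xh ∘ₗ Nh = 0)
    (g22 : N ∘ₗ Yc + Xh ∘ₗ Mh = LinearMap.id) :
    ∀ (a_u : U) (a_y : Ys),
      (X a_u - Yc a_y = 0) ↔ ∃ r : W, a_u = -(Yh r) ∧ -a_y = Xh r := by
  intro a_u a_y
  rw [sub_eq_add_neg, ← map_neg]
  constructor
  · intro h
    refine ⟨Mh (-a_y) - Nh a_u, ?_, ?_⟩
    · have hu := bezout_reconstruct_fst g11 g12 a_u (-a_y)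
      rwa [h, map_zero, zero_sub] at hu
    · have hy := bezout_reconstruct_snd g21 g22 a_u (-a_y)
      rwa [h, map_zero, zero_add] at hy
  · rintro ⟨r, rfl, hy⟩
    rw [hy]
    exact map_neg_Yh_add_map_Xh_eq_zero h12 r

/-- Unactuability characterization: X a_u − Y a_y = 0 iff (a_u, −a_y) lies in the
controller image subspace I_K. -/
theorem stmt10 {R : Type*} [CommRing R]
    {U Ys V W : Type*} [AddCommGroup U] [AddCommGroup Ys] [AddCommGroup V] [AddCommGroup W]
    [Module R U] [Module R Ys] [Module R V] [Module R W]
    (M : V →ₗ[R] U) (N : V →ₗ[R] Ys) (X : U →ₗ[R] V) (Yc : Ys →ₗ[R] V)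
    (Mh : Ys →ₗ[R] W) (Nh : U →ₗ[R] W) (Xh : W →ₗ[R] Ys) (Yh : W →ₗ[R] U)
    (h11 : X ∘ₗ M + Yc ∘ₗ N = LinearMap.id)
    (h12 : -(X ∘ₗ Yh) + Yc ∘ₗ Xh = 0)
    (h21 : -(Nh ∘ₗ M) + Mh ∘ₗ N = 0)
    (h22 : Nh ∘ₗ Yh + Mh ∘ₗ Xh = LinearMap.id)
    (g11 : M ∘ₗ X + Yh ∘ₗ Nh = LinearMap.id)
    (g12 : M ∘ₗ Yc - Yh ∘ₗ Mh = 0)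
    (g21 : N ∘ₗ X - Xh ∘ₗ Nh = 0)
    (g22 : N ∘ₗ Yc + Xh ∘ₗ Mh = LinearMap.id) :
    ∀ (a_u : U) (a_y : Ys),
      (X a_u - Yc a_y = 0) ↔ ∃ r : W, a_u = -(Yh r) ∧ -a_y = Xh r :=
  stmt10_general M N X Yc Mh Nh Xh Yh h12 g11 g12 g21 g22
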